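/- Fundamental theorem of tropical algebra: the semiring 𝕋 is tropically algebraically closed, i.e. every nonconstant polynomial f ∈ 𝕋[x_1,…,x_n] (f is not of the form C c for a constant c ∈ 𝕋) has a root: there exists a ∈ 𝕋^n with f(a) ∈ 𝕌̄. -/

import Mathlib

/-- The extended tropical semiring `𝕋`: tangible reals `(a, false)`,
ghost reals `(a, true)`, and `none` = `-∞`. -/
def T : Type := Option (ℝ × Bool)

namespace T

/-- The tangible element of value `a`. -/
def tang (a : ℝ) : T := some (a, false)

/-- The ghost element `a^ν` of value `a`. -/
def ghost (a : ℝ) : T := some (a, true)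

/-- Tropical addition on `𝕋`. -/
noncomputable def add : T → T → T
  | none, y => y
  | some p, none => some p
  | some (a, s), some (b, t) =>
      if a < b then some (b, t) else if b < a then some (a, s) else some (a, true)

/-- Tropical multiplication on `𝕋`. -/
noncomputable def mul : T → T → T
  | none, _ => none
  | some _, none => none
  | some (a, s), some (b, t) => some (a + b, s || t)

lemma add_assoc' : ∀ x y z : T, add (add x y) z = add x (add y z) := by
  show ∀ x y z : Option (ℝ × Bool), @Eq (Option (ℝ × Bool)) (add (add x y) z) (add x (add y z))
  have h0 : ∀ y : Option (ℝ × Bool), @Eq (Option (ℝ × Bool)) (add none y) y := fun _ => rfl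
  have h0' : ∀ p : ℝ × Bool, @Eq (Option (ℝ × Bool)) (add (some p) none) (some p) :=
    fun _ => rfl
  have hadd : ∀ (a b : ℝ) (s t : Bool), @Eq (Option (ℝ × Bool)) (add (some (a, s)) (some (b, t)))
      (@ite (Option (ℝ × Bool)) (a < b) _ (some (b, t))
        (@ite (Option (ℝ × Bool)) (b < a) _ (some (a, s)) (some (a, true)))) :=
    fun _ _ _ _ => rfl
  rintro (_ | ⟨a, s⟩) (_ | ⟨b, t⟩) (_ | ⟨c, u⟩) <;>
    (try by_cases h1 : a < b) <;> (try by_cases h2 : b < a) <;>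
    (try by_cases h3 : b < c) <;> (try by_cases h4 : c < b) <;>
    (try by_cases h5 : a < c) <;> (try by_cases h6 : c < a) <;>
    (try simp only [h0, h0', hadd, *, if_true, if_false]) <;>
    first
      | rfl
      | (exfalso; linarith)
      | (refine congrArg some ?_; refine Prod.ext ?_ ?_ <;>
          first | rfl | linarith | simp)

lemma add_comm' : ∀ x y : T, add x y = add y x := by
  rintro (_ | ⟨a, s⟩) (_ | ⟨b, t⟩) <;>
    (try by_cases h1 : a < b) <;> (try by_cases h2 : b < a) <;>
    (try simp only [add, *]) <;>
    first
      | rfl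
      | (exfalso; linarith)
      | (refine congrArg some ?_; refine Prod.ext ?_ ?_ <;>
          first | rfl | linarith | simp)

lemma mul_assoc' : ∀ x y z : T, mul (mul x y) z = mul x (mul y z) := by
  show ∀ x y z : Option (ℝ × Bool), @Eq (Option (ℝ × Bool)) (mul (mul x y) z) (mul x (mul y z))
  rintro (_ | ⟨a, s⟩) (_ | ⟨b, t⟩) (_ | ⟨c, u⟩) <;>
    simp [mul, add_assoc, Bool.or_assoc]

lemma mul_comm' : ∀ x y : T, mul x y = mul y x := by
  show ∀ x y : Option (ℝ × Bool), @Eq (Option (ℝ × Bool)) (mul x y) (mul y x)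
  rintro (_ | ⟨a, s⟩) (_ | ⟨b, t⟩) <;> simp [mul, add_comm, Bool.or_comm]

lemma left_distrib' : ∀ x y z : T, mul x (add y z) = add (mul x y) (mul x z) := by
  rintro (_ | ⟨a, s⟩) (_ | ⟨b, t⟩) (_ | ⟨c, u⟩) <;>
    (try by_cases h1 : b < c) <;> (try by_cases h2 : c < b) <;>
    (try by_cases h3 : a + b < a + c) <;> (try by_cases h4 : a + c < a + b) <;>
    (try simp only [add, mul, *]) <;>
    first
      | rfl
      | (exfalso; linarith)
      | (refine congrArg some ?_; refine Prod.ext ?_ ?_ <;>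
          first | rfl | linarith | simp)

noncomputable instance : Zero T := ⟨none⟩
noncomputable instance : One T := ⟨some (0, false)⟩
noncomputable instance : Add T := ⟨add⟩
noncomputable instance : Mul T := ⟨mul⟩

noncomputable instance : CommSemiring T where
  add := (· + ·)
  zero := 0
  add_assoc := add_assoc'
  zero_add := fun x => by cases x <;> rfl
  add_zero := fun x => by cases x <;> rfl
  add_comm := add_comm'
  mul := (· * ·)
  one := 1
  mul_assoc := mul_assoc'
  one_mul := fun x => by
    show mul (some (0, false)) x = x
    rcases x with _ | ⟨a, s⟩ <;> simp [mul] <;> rfl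
  mul_one := fun x => by
    show mul x (some (0, false)) = x
    rcases x with _ | ⟨a, s⟩ <;> simp [mul] <;> rfl
  mul_comm := mul_comm'
  zero_mul := fun x => by cases x <;> rfl
  mul_zero := fun x => by cases x <;> rfl
  left_distrib := left_distrib'
  right_distrib := fun x y z => by
    show mul (add x y) z = add (mul x z) (mul y z)
    rw [mul_comm', left_distrib', mul_comm' z x, mul_comm' z y]
  nsmul := nsmulRec

/-- Membership in the ghost part `𝕌̄ = 𝕌 ∪ {-∞}` of `𝕋`. -/
def isGhost : T → Prop
  | none => True
  | some (_, s) => s = true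

/-- Membership in the tangible part `ℝ ∪ {-∞}` of `𝕋`. -/
def isTangible : T → Prop
  | none => True
  | some (_, s) => s = false

/-- The underlying real value (junk value `0` at `-∞`); this is `π` on elements `≠ -∞`. -/
def val : T → ℝ
  | none => 0
  | some (a, _) => a

/-- The ghost map `ν`. -/
def nu : T → T
  | none => none
  | some (a, _) => some (a, true)

end T

namespace T

/-- The model value in the half line `[0,∞)`: `-∞ ↦ 0`, an element of value `a ↦ exp a`. -/
noncomputable def gval : T → ℝ
  | none => 0
  | some (a, _) => Real.exp a

lemma nu_isGhost : ∀ x : T, isGhost (nu x)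
  | none => trivial
  | some (_, _) => rfl

lemma gval_injOn_tang : Set.InjOn gval {x : T | isTangible x} := by
  rintro (_ | ⟨a, s⟩) hx (_ | ⟨b, t⟩) hy h <;>
    simp only [gval, Set.mem_setOf_eq, isTangible] at hx hy h
  · rfl
  · exact absurd h.symm (Real.exp_pos b).ne'
  · exact absurd h (Real.exp_pos a).ne'
  · rw [Real.exp_eq_exp] at h; subst hx; subst hy; subst h; rfl

lemma gval_injOn_ghost : Set.InjOn gval {x : T | isGhost x} := by
  rintro (_ | ⟨a, s⟩) hx (_ | ⟨b, t⟩) hy h <;>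
    simp only [gval, Set.mem_setOf_eq, isGhost] at hx hy h
  · rfl
  · exact absurd h.symm (Real.exp_pos b).ne'
  · exact absurd h (Real.exp_pos a).ne'
  · rw [Real.exp_eq_exp] at h; subst hx; subst hy; subst h; rfl

lemma gval_image_tang : gval '' {x : T | isTangible x} = Set.Ici 0 := by
  ext y
  constructor
  · rintro ⟨(_ | ⟨a, s⟩), hx, rfl⟩
    · exact Set.self_mem_Ici
    · exact le_of_lt (by simpa [gval] using Real.exp_pos a)
  · intro hy
    rcases eq_or_lt_of_le (Set.mem_Ici.mp hy : (0 : ℝ) ≤ y) with h | h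
    · exact ⟨none, trivial, h⟩
    · exact ⟨some (Real.log y, false), rfl, by simp [gval, Real.exp_log h]⟩

lemma gval_image_ghost : gval '' {x : T | isGhost x} = Set.Ici 0 := by
  ext y
  constructor
  · rintro ⟨(_ | ⟨a, s⟩), hx, rfl⟩
    · exact Set.self_mem_Ici
    · exact le_of_lt (by simpa [gval] using Real.exp_pos a)
  · intro hy
    rcases eq_or_lt_of_le (Set.mem_Ici.mp hy : (0 : ℝ) ≤ y) with h | h
    · exact ⟨none, trivial, h⟩
    · exact ⟨some (Real.log y, true), rfl, by simp [gval, Real.exp_log h]⟩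

/-- The closed sets of the topology on `𝕋`: both the tangible and the ghost layers are
closed in the model `[0,∞)` of `𝕌̄`, and the ghost image of the tangible layer is
contained in the set. -/
def TIsClosed (W : Set T) : Prop :=
  IsClosed (gval '' (W ∩ {x | isTangible x})) ∧
  IsClosed (gval '' (W ∩ {x | isGhost x})) ∧
  nu '' (W ∩ {x | isTangible x}) ⊆ W ∩ {x | isGhost x}

/-- The topology on `𝕋`. -/
noncomputable instance : TopologicalSpace T :=
  TopologicalSpace.ofClosed {W | TIsClosed W}
    (by
      refine ⟨?_, ?_, ?_⟩ <;> simp [TIsClosed])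
    (fun A hA => by
      rcases A.eq_empty_or_nonempty with rfl | hne
      · rw [Set.sInter_empty]
        refine ⟨?_, ?_, ?_⟩
        · rw [Set.univ_inter, gval_image_tang]; exact isClosed_Ici
        · rw [Set.univ_inter, gval_image_ghost]; exact isClosed_Ici
        · rintro y ⟨x, ⟨-, _⟩, rfl⟩
          exact ⟨trivial, nu_isGhost x⟩
      · have : Nonempty A := hne.to_subtype
        have h1 : (⋂₀ A) ∩ {x : T | isTangible x}
            = ⋂ (W : A), ((W : Set T) ∩ {x | isTangible x}) := by
          ext x
          simp only [Set.mem_inter_iff, Set.mem_sInter, Set.mem_iInter, Set.mem_setOf_eq]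
          constructor
          · rintro ⟨h, ht⟩ W; exact ⟨h W W.2, ht⟩
          · intro h
            obtain ⟨W, hW⟩ := hne
            exact ⟨fun V hV => (h ⟨V, hV⟩).1, (h ⟨W, hW⟩).2⟩
        have h2 : (⋂₀ A) ∩ {x : T | isGhost x}
            = ⋂ (W : A), ((W : Set T) ∩ {x | isGhost x}) := by
          ext x
          simp only [Set.mem_inter_iff, Set.mem_sInter, Set.mem_iInter, Set.mem_setOf_eq]
          constructor
          · rintro ⟨h, ht⟩ W; exact ⟨h W W.2, ht⟩
          · intro h
            obtain ⟨W, hW⟩ := hne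
            exact ⟨fun V hV => (h ⟨V, hV⟩).1, (h ⟨W, hW⟩).2⟩
        refine ⟨?_, ?_, ?_⟩
        · rw [h1, Set.InjOn.image_iInter_eq
            (gval_injOn_tang.mono (Set.iUnion_subset fun W => Set.inter_subset_right))]
          exact isClosed_iInter fun W => (hA W.2).1
        · rw [h2, Set.InjOn.image_iInter_eq
            (gval_injOn_ghost.mono (Set.iUnion_subset fun W => Set.inter_subset_right))]
          exact isClosed_iInter fun W => (hA W.2).2.1
        · rintro y ⟨x, ⟨hx, hxt⟩, rfl⟩
          refine ⟨fun W hW => ((hA hW).2.2 ⟨x, ⟨hx W hW, hxt⟩, rfl⟩).1, nu_isGhost x⟩)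
    (fun A hA B hB => by
      have h1 : (A ∪ B) ∩ {x : T | isTangible x}
          = (A ∩ {x | isTangible x}) ∪ (B ∩ {x | isTangible x}) :=
        Set.union_inter_distrib_right A B _
      have h2 : (A ∪ B) ∩ {x : T | isGhost x}
          = (A ∩ {x | isGhost x}) ∪ (B ∩ {x | isGhost x}) :=
        Set.union_inter_distrib_right A B _
      refine ⟨?_, ?_, ?_⟩
      · rw [h1, Set.image_union]; exact hA.1.union hB.1
      · rw [h2, Set.image_union]; exact hA.2.1.union hB.2.1
      · rintro y ⟨x, ⟨hx, hxt⟩, rfl⟩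
        rcases hx with hxA | hxB
        · have h := hA.2.2 ⟨x, ⟨hxA, hxt⟩, rfl⟩
          exact ⟨Or.inl h.1, h.2⟩
        · have h := hB.2.2 ⟨x, ⟨hxB, hxt⟩, rfl⟩
          exact ⟨Or.inr h.1, h.2⟩)

end T

/-!
Evaluate at the point all of whose coordinates are one ghost element `x`. Every nonconstant
monomial then takes a ghost value, and once `x` is large enough a nonconstant monomial of `f`
dominates the constant term. A sum in which some ghost summand dominates all tangible summands
is ghost, so `f` is ghost there.
-/

namespace MvPolynomial

variable {R σ : Type*} [CommSemiring R]

lemma exists_mem_support_ne_zero_of_ne_C {f : MvPolynomial σ R} (hf : ∀ c : R, f ≠ C c) :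
    ∃ d ∈ f.support, d ≠ 0 := by
  by_contra! h
  refine hf _ (totalDegree_eq_zero_iff_eq_C.mp ((totalDegree_eq_zero_iff σ f).mpr ?_))
  intro m hm i
  simp [h m hm]

lemma eval_const_eq_sum (x : R) (f : MvPolynomial σ R) :
    eval (fun _ => x) f = ∑ d ∈ f.support, f.coeff d * x ^ d.degree := by
  simp only [eval_eq, Finset.prod_pow_eq_pow_sum, Finsupp.degree_apply]

end MvPolynomial

lemma le_mul_max_one_div_pow {c : ℝ} (hc : 0 < c) (v : ℝ) {k : ℕ} (hk : k ≠ 0) :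
    v ≤ c * max 1 (v / c) ^ k :=
  calc v = c * (v / c) := by field_simp
    _ ≤ c * max 1 (v / c) := by gcongr; exact le_max_right _ _
    _ ≤ c * max 1 (v / c) ^ k := by gcongr; exact le_self_pow₀ (le_max_left _ _) hk

namespace T

lemma gval_pos {x : T} (hx : x ≠ 0) : 0 < gval x := by
  rcases x with _ | ⟨a, s⟩
  · exact absurd rfl hx
  · exact Real.exp_pos a

lemma gval_nonneg (x : T) : 0 ≤ gval x := by
  rcases x with _ | ⟨a, s⟩
  · exact le_rfl
  · exact (Real.exp_pos a).le

lemma gval_mul (x y : T) : gval (x * y) = gval x * gval y := by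
  change gval (mul x y) = _
  rcases x with _ | ⟨a, s⟩ <;> rcases y with _ | ⟨b, t⟩ <;> simp [gval, mul, Real.exp_add]

lemma gval_pow (x : T) (k : ℕ) : gval (x ^ k) = gval x ^ k := by
  induction k with
  | zero => rw [pow_zero, pow_zero]; exact Real.exp_zero
  | succ k ih => rw [pow_succ, gval_mul, ih, pow_succ]

lemma add_some_some (a b : ℝ) (s t : Bool) :
    (add (some (a, s)) (some (b, t)) : T) =
      if a < b then some (b, t) else if b < a then some (a, s) else some (a, true) := rfl

lemma gval_add (x y : T) : gval (x + y) = max (gval x) (gval y) := by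
  change gval (add x y) = _
  rcases x with _ | ⟨a, s⟩ <;> rcases y with _ | ⟨b, t⟩
  · simp [gval, add]
  · simp [gval, add, (Real.exp_pos b).le]
  · simp [gval, add, (Real.exp_pos a).le]
  · rcases lt_trichotomy a b with hab | rfl | hba
    · simp [add_some_some, gval, hab, hab.le]
    · simp [add_some_some, gval]
    · simp [add_some_some, gval, hba, hba.le, hba.not_gt]

lemma isGhost_add {x y : T} (hx : isGhost x) (hy : isGhost y) : isGhost (x + y) := by
  change isGhost (add x y)
  rcases x with _ | ⟨a, s⟩ <;> rcases y with _ | ⟨b, t⟩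
  · trivial
  · exact hy
  · exact hx
  · rcases lt_trichotomy a b with hab | rfl | hba
    · simpa [add_some_some, hab] using hy
    · simp [add_some_some, isGhost]
    · simpa [add_some_some, hba, hba.not_gt] using hx

lemma isGhost_add_of_gval_le {x y : T} (hx : isGhost x) (h : gval y ≤ gval x) :
    isGhost (x + y) := by
  change isGhost (add x y)
  rcases x with _ | ⟨a, s⟩ <;> rcases y with _ | ⟨b, t⟩
  · trivial
  · exact absurd h (Real.exp_pos b).not_ge
  · exact hx
  · rcases (Real.exp_le_exp.1 h).lt_or_eq with hba | rfl
    · simpa [add_some_some, hba, hba.not_gt] using hx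
    · simp [add_some_some, isGhost]

lemma isGhost_mul_left (x : T) {y : T} (hy : isGhost y) : isGhost (x * y) := by
  change isGhost (mul x y)
  rcases x with _ | ⟨a, s⟩ <;> rcases y with _ | ⟨b, t⟩ <;> simp_all [isGhost, mul]

lemma isGhost_pow {x : T} (hx : isGhost x) {k : ℕ} (hk : k ≠ 0) : isGhost (x ^ k) := by
  obtain ⟨m, rfl⟩ := Nat.exists_eq_succ_of_ne_zero hk
  rw [pow_succ]
  exact isGhost_mul_left _ hx

lemma exists_isGhost_gval_eq {r : ℝ} (hr : 0 ≤ r) : ∃ x, isGhost x ∧ gval x = r :=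
  (gval_image_ghost.symm ▸ hr : r ∈ gval '' {x : T | isGhost x})

section Sums

variable {ι : Type*} {s : Finset ι} {g : ι → T}

lemma isGhost_sum (h : ∀ i ∈ s, isGhost (g i)) : isGhost (∑ i ∈ s, g i) :=
  Finset.sum_induction g isGhost (fun _ _ => isGhost_add) trivial h

lemma gval_le_sum {i : ι} (hi : i ∈ s) : gval (g i) ≤ gval (∑ j ∈ s, g j) := by
  classical
  rw [← Finset.add_sum_erase s g hi, gval_add]
  exact le_max_left _ _

lemma gval_sum_le {B : ℝ} (hB : 0 ≤ B) (h : ∀ i ∈ s, gval (g i) ≤ B) :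
    gval (∑ i ∈ s, g i) ≤ B :=
  Finset.sum_induction g (gval · ≤ B)
    (fun x y hx hy => (gval_add x y).symm ▸ max_le hx hy) hB h

lemma isGhost_sum_of_dominant {j : ι} (hj : j ∈ s) (hgj : isGhost (g j))
    (h : ∀ i ∈ s, isGhost (g i) ∨ gval (g i) ≤ gval (g j)) : isGhost (∑ i ∈ s, g i) := by
  classical
  rw [← Finset.sum_filter_add_sum_filter_not s (fun i => isGhost (g i))]
  refine isGhost_add_of_gval_le (isGhost_sum fun i hi => (Finset.mem_filter.1 hi).2) ?_
  calc gval (∑ i ∈ s with ¬isGhost (g i), g i)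
      ≤ gval (g j) := gval_sum_le (gval_nonneg _) fun i hi => by
        obtain ⟨his, hig⟩ := Finset.mem_filter.1 hi
        exact (h i his).resolve_left hig
    _ ≤ gval (∑ i ∈ s with isGhost (g i), g i) := gval_le_sum (Finset.mem_filter.2 ⟨hj, hgj⟩)

end Sums

end T

/-- Fundamental theorem of tropical algebra: every nonconstant
`f ∈ 𝕋[x_1,…,x_n]` has a root, i.e. a point where it takes a ghost value. -/
theorem tropical_fundamental_theorem (n : ℕ) (f : MvPolynomial (Fin n) T)
    (hnc : ∀ c : T, f ≠ MvPolynomial.C c) :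
    ∃ a : Fin n → T, T.isGhost (MvPolynomial.eval a f) := by
  obtain ⟨d, hd, hd0⟩ := MvPolynomial.exists_mem_support_ne_zero_of_ne_C hnc
  have hdeg : d.degree ≠ 0 := (Finsupp.degree_eq_zero_iff d).not.mpr hd0
  have hc : 0 < T.gval (f.coeff d) := T.gval_pos (MvPolynomial.mem_support_iff.mp hd)
  set r := max 1 (T.gval (f.coeff 0) / T.gval (f.coeff d))
  obtain ⟨x, hx, hxr⟩ := T.exists_isGhost_gval_eq (zero_le_one.trans (le_max_left _ _) : 0 ≤ r)
  refine ⟨fun _ => x, ?_⟩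
  rw [MvPolynomial.eval_const_eq_sum]
  refine T.isGhost_sum_of_dominant hd (T.isGhost_mul_left _ (T.isGhost_pow hx hdeg)) fun e _ => ?_
  rcases eq_or_ne e 0 with rfl | he
  · right
    simpa [T.gval_mul, T.gval_pow, hxr] using le_mul_max_one_div_pow hc (T.gval (f.coeff 0)) hdeg
  · left
    exact T.isGhost_mul_left _ (T.isGhost_pow hx ((Finsupp.degree_eq_zero_iff e).not.mpr he))
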